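/- arXiv:2107.03012 — 4 statements merged into one kernel-verified Lean document; each statement's English description precedes it below -/
import Mathlib

section
/- With the notation of the Taylor map T_ψ(a) = Σ_α ψ(δ^α a)·t^α/α! from a commutative ring R with m commuting derivations δ₁,…,δₘ to S[[t₁,…,tₘ]] (S a commutative ℚ-algebra, ψ : R → S a ring homomorphism), the map T_ψ is a differential homomorphism: T_ψ(δᵢ a) = ∂/∂tᵢ (T_ψ(a)) for every a ∈ R and every 1 ≤ i ≤ m. -/
open scoped BigOperators

/-- The iterated derivative `δ^α = δ₁^{α₁} ∘ ⋯ ∘ δₘ^{αₘ}`. -/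
noncomputable def multiDeriv {R : Type*} [CommRing R] {m : ℕ}
    (δ : Fin m → Derivation ℤ R R) (α : Fin m →₀ ℕ) : R → R :=
  (List.ofFn fun i : Fin m => (⇑(δ i))^[α i]).foldr (· ∘ ·) id

/-- The Taylor map `T_ψ(a) = Σ_α ψ(δ^α a) · t^α / α!`. -/
noncomputable def taylorMap {R S : Type*} [CommRing R] [CommRing S] [Algebra ℚ S] {m : ℕ}
    (δ : Fin m → Derivation ℤ R R) (ψ : R →+* S) (a : R) :
    MvPowerSeries (Fin m) S :=
  fun α => (((∏ i, (α i).factorial) : ℕ) : ℚ)⁻¹ • ψ (multiDeriv δ α a)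

/-- The partial derivative `∂/∂tᵢ` on multivariate power series, defined
coefficientwise: the coefficient of `t^α` in `∂f/∂tᵢ` is `(αᵢ + 1)` times the
coefficient of `t^{α + eᵢ}` in `f`. -/
noncomputable def mvPowerSeriesPderiv {S : Type*} [CommRing S] {m : ℕ} (i : Fin m)
    (f : MvPowerSeries (Fin m) S) : MvPowerSeries (Fin m) S :=
  fun α => (α i + 1 : ℕ) • f (α + Finsupp.single i 1)

/-!
Because the `δⱼ` commute, `δ^α` is a product of pairwise commuting elements `δⱼ^{αⱼ}` of
`Module.End ℤ R`, so `δ^α ∘ δᵢ = δᵢ ∘ δ^α = δ^{α + eᵢ}`. Comparing coefficients of `t^α`, the claim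
then reduces to `(α + eᵢ)! = (αᵢ + 1) · α!`, and `αᵢ + 1` is invertible in the `ℚ`-algebra `S`.
-/

theorem List.prod_ofFn_update_mul {M : Type*} [Monoid M] {m : ℕ} (f : Fin m → M) (i : Fin m)
    {g : M} (hg : ∀ j, Commute g (f j)) :
    (List.ofFn (Function.update f i (g * f i))).prod = g * (List.ofFn f).prod := by
  induction m with
  | zero => exact i.elim0
  | succ m ih =>
    rw [List.ofFn_succ, List.ofFn_succ]
    induction i using Fin.cases with
    | zero => simp [mul_assoc]
    | succ k =>
      have htail : (fun j => Function.update f k.succ (g * f k.succ) j.succ) =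
          Function.update (fun j => f j.succ) k (g * f k.succ) :=
        Fin.tail_update_succ f k _
      rw [List.prod_cons, List.prod_cons, Function.update_of_ne (Fin.succ_ne_zero k).symm, htail,
        ih _ k fun j => hg j.succ, ← mul_assoc, ← mul_assoc, (hg 0).eq]

theorem Module.End.coe_list_prod {A M : Type*} [Semiring A] [AddCommMonoid M] [Module A M]
    (l : List (Module.End A M)) : ⇑l.prod = (l.map (⇑)).foldr (· ∘ ·) id := by
  induction l with
  | nil => rfl
  | cons f l ih => rw [List.prod_cons, Module.End.coe_mul, ih]; rfl

theorem Finsupp.prod_factorial_add_single {σ : Type*} [Fintype σ] [DecidableEq σ]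
    (α : σ →₀ ℕ) (i : σ) :
    ∏ j, ((α + Finsupp.single i 1 : σ →₀ ℕ) j).factorial = (α i + 1) * ∏ j, (α j).factorial := by
  have hcompl : ∏ j ∈ {i}ᶜ, ((α + Finsupp.single i 1 : σ →₀ ℕ) j).factorial =
      ∏ j ∈ {i}ᶜ, (α j).factorial :=
    Finset.prod_congr rfl fun j hj => by
      rw [Finset.mem_compl, Finset.mem_singleton] at hj
      simp [Ne.symm hj]
  rw [Fintype.prod_eq_mul_prod_compl i, Fintype.prod_eq_mul_prod_compl i (fun j => (α j).factorial),
    hcompl]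
  simp [Nat.factorial_succ, mul_assoc]

section multiDeriv

variable {R : Type*} [CommRing R] {m : ℕ} (δ : Fin m → Derivation ℤ R R)

theorem multiDeriv_eq_coe_prod (α : Fin m →₀ ℕ) :
    multiDeriv δ α = ⇑(List.ofFn fun i => (δ i : Module.End ℤ R) ^ α i).prod := by
  simp [multiDeriv, Module.End.coe_list_prod, List.map_ofFn, Function.comp_def, Module.End.coe_pow]

variable {δ} (hcomm : ∀ i j : Fin m, ∀ a : R, δ i (δ j a) = δ j (δ i a))
include hcomm

theorem commute_derivation_pow (i j : Fin m) (n : ℕ) :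
    Commute (δ i : Module.End ℤ R) ((δ j : Module.End ℤ R) ^ n) :=
  Commute.pow_right (LinearMap.ext (hcomm i j)) n

theorem multiDeriv_derivation_apply (α : Fin m →₀ ℕ) (i : Fin m) (a : R) :
    multiDeriv δ α (δ i a) = δ i (multiDeriv δ α a) := by
  have hi : Commute (δ i : Module.End ℤ R) (List.ofFn fun j => (δ j : Module.End ℤ R) ^ α j).prod :=
    Commute.list_prod_right _ _ fun f hf => by
      obtain ⟨j, rfl⟩ := List.mem_ofFn.mp hf
      exact commute_derivation_pow hcomm i j _
  rw [multiDeriv_eq_coe_prod]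
  exact (LinearMap.congr_fun hi.eq a).symm

theorem multiDeriv_add_single (α : Fin m →₀ ℕ) (i : Fin m) (a : R) :
    multiDeriv δ (α + Finsupp.single i 1) a = δ i (multiDeriv δ α a) := by
  have hpow : (fun j => (δ j : Module.End ℤ R) ^ (α + Finsupp.single i 1 : Fin m →₀ ℕ) j) =
      Function.update (fun j => (δ j : Module.End ℤ R) ^ α j) i (δ i * δ i ^ α i) := by
    funext j
    rcases eq_or_ne j i with rfl | hj
    · simp [pow_succ']
    · simp [hj]
  rw [multiDeriv_eq_coe_prod, multiDeriv_eq_coe_prod, hpow,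
    List.prod_ofFn_update_mul _ _ fun j => commute_derivation_pow hcomm i j _]
  rfl

end multiDeriv

/-- The Taylor map `T_ψ` is a differential homomorphism:
`T_ψ(δᵢ a) = ∂/∂tᵢ (T_ψ(a))` for every `a ∈ R` and every `i`. -/
theorem taylorMap_differential {R S : Type*} [CommRing R] [CommRing S] [Algebra ℚ S] {m : ℕ}
    (δ : Fin m → Derivation ℤ R R)
    (hcomm : ∀ i j : Fin m, ∀ a : R, δ i (δ j a) = δ j (δ i a))
    (ψ : R →+* S) :
    ∀ (a : R) (i : Fin m),
      taylorMap δ ψ (δ i a) = mvPowerSeriesPderiv i (taylorMap δ ψ a) := by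
  intro a i
  funext α
  simp only [taylorMap, mvPowerSeriesPderiv, multiDeriv_derivation_apply hcomm,
    multiDeriv_add_single hcomm, Finsupp.prod_factorial_add_single]
  rw [← Nat.cast_smul_eq_nsmul ℚ, smul_smul]
  congr 1
  push_cast
  field_simp
end

section
/- Let K be a field of characteristic zero with a derivation δ, and let A be a differential K-algebra which is differentially simple (has no proper nonzero ideals closed under δ). Then A is an integral domain. -/
/-- Let `K` be a field of characteristic zero with a derivation `δ`,
and let `A` be a nontrivial differential `K`-algebra (with derivation `δA` compatible
with `δK` on `K`) which is differentially simple: its only ideals closed under the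
derivation are `0` and `A`. Then `A` is an integral domain. -/
theorem diffSimple_isDomain {K A : Type*} [Field K] [CharZero K]
    [CommRing A] [Algebra K A] [Nontrivial A]
    (δK : Derivation ℤ K K) (δA : Derivation ℤ A A)
    (hcompat : ∀ x : K, δA (algebraMap K A x) = algebraMap K A (δK x))
    (hsimple : ∀ I : Ideal A, (∀ a ∈ I, δA a ∈ I) → I = ⊥ ∨ I = ⊤) :
    IsDomain A := by
  classical
  -- positive natural numbers are cancellable in `A`
  have hcancel : ∀ (n : ℕ) (x : A), 0 < n → (n : A) * x = 0 → x = 0 := by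
    intro n x hn hx
    have h1 : IsUnit ((n : A)) := by
      have h2 : (n : A) = algebraMap K A (n : K) := by simp
      rw [h2]
      exact (isUnit_iff_ne_zero.2 (Nat.cast_ne_zero.2 hn.ne')).map _
    obtain ⟨u, hu⟩ := h1
    rw [← hu] at hx
    exact (Units.mul_right_eq_zero u).mp hx
  -- key inductive step
  have hstep : ∀ (a : A) (m j : ℕ), a ^ (m + 1) * (δA a) ^ (j + 1) = 0 →
      a ^ m * (δA a) ^ (j + 3) = 0 := by
    intro a m j h
    set d := δA a with hd
    have h0 := congrArg δA h
    rw [map_zero, Derivation.leibniz, Derivation.leibniz_pow, Derivation.leibniz_pow] at h0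
    simp only [smul_eq_mul, nsmul_eq_mul, Nat.add_sub_cancel, Nat.cast_add, Nat.cast_one] at h0
    have E2 : ((m : A) + 1) * (a ^ m * d ^ (j + 3)) = 0 := by
      linear_combination d * h0 - ((j : A) + 1) * δA d * h
    have := hcancel (m + 1) (a ^ m * d ^ (j + 3)) (Nat.succ_pos m) (by push_cast; exact E2)
    exact this
  -- iterating: if a^m kills a power of δA a, then δA a is nilpotent
  have hiter : ∀ (m : ℕ) (a : A) (j : ℕ), a ^ m * (δA a) ^ (j + 1) = 0 →
      (δA a) ^ (j + 1 + 2 * m) = 0 := by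
    intro m
    induction m with
    | zero => intro a j h; simpa using h
    | succ k ih =>
      intro a j h
      have h2 := hstep a k j h
      have h3 : a ^ k * (δA a) ^ ((j + 2) + 1) = 0 := by
        convert h2 using 2
      have := ih a (j + 2) h3
      have harith : j + 2 + 1 + 2 * k = j + 1 + 2 * (k + 1) := by omega
      rwa [harith] at this
  -- the nilradical is a differential ideal, hence zero; so A is reduced
  have hred : ∀ x : A, IsNilpotent x → x = 0 := by
    have hdiff : ∀ a ∈ nilradical A, δA a ∈ nilradical A := by
      intro a ha
      rw [mem_nilradical] at ha ⊢
      obtain ⟨n, hn⟩ := ha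
      rcases n with _ | m
      · exact ⟨0, by simp at hn⟩
      · have h0 := congrArg δA hn
        rw [map_zero, Derivation.leibniz_pow] at h0
        simp only [smul_eq_mul, nsmul_eq_mul, Nat.add_sub_cancel, Nat.cast_add,
          Nat.cast_one] at h0
        have h1 : a ^ m * (δA a) ^ (0 + 1) = 0 := by
          have := hcancel (m + 1) (a ^ m * δA a) (Nat.succ_pos m)
            (by push_cast; linear_combination h0)
          simpa using this
        exact ⟨0 + 1 + 2 * m, hiter m a 0 h1⟩
    rcases hsimple (nilradical A) hdiff with h | h
    · intro x hx
      have : x ∈ nilradical A := mem_nilradical.2 hx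
      rw [h] at this
      simpa using this
    · exfalso
      have h1 : (1 : A) ∈ nilradical A := h ▸ Submodule.mem_top
      rw [mem_nilradical] at h1
      obtain ⟨n, hn⟩ := h1
      simp at hn
  -- now show there are no zero divisors
  have hnzd : ∀ {a b : A}, a * b = 0 → a = 0 ∨ b = 0 := by
    intro a b hab
    by_contra hcon
    push_neg at hcon
    obtain ⟨ha, hb⟩ := hcon
    -- the ideal of elements killed by some power of b
    set I : Ideal A :=
      { carrier := {x | ∃ n : ℕ, x * b ^ n = 0}
        zero_mem' := ⟨0, by simp⟩
        add_mem' := by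
          rintro x y ⟨n, hn⟩ ⟨m, hm⟩
          exact ⟨n + m, by rw [pow_add]; linear_combination b ^ m * hn + b ^ n * hm⟩
        smul_mem' := by
          rintro c x ⟨n, hn⟩
          exact ⟨n, by rw [smul_eq_mul, mul_assoc, hn, mul_zero]⟩ } with hI
    have hdiff : ∀ x ∈ I, δA x ∈ I := by
      rintro x ⟨n, hn⟩
      rcases n with _ | k
      · have hx0 : x = 0 := by simpa using hn
        exact ⟨0, by simp [hx0]⟩
      · refine ⟨k + 2, ?_⟩
        have h0 := congrArg δA hn
        rw [map_zero, Derivation.leibniz, Derivation.leibniz_pow] at h0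
        simp only [smul_eq_mul, nsmul_eq_mul, Nat.add_sub_cancel, Nat.cast_add,
          Nat.cast_one] at h0
        have : δA x * b ^ (k + 2) = 0 := by
          linear_combination b * h0 - ((k : A) + 1) * δA b * hn
        exact this
    rcases hsimple I hdiff with h | h
    · have : a ∈ I := ⟨1, by simpa using hab⟩
      rw [h] at this
      exact ha (by simpa using this)
    · have h1 : (1 : A) ∈ I := h ▸ Submodule.mem_top
      obtain ⟨n, hn⟩ := h1
      rw [one_mul] at hn
      exact hb (hred b ⟨n, hn⟩)
  have : NoZeroDivisors A := ⟨fun h => hnzd h⟩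
  exact NoZeroDivisors.to_isDomain A
end

section
/- Let R be a differential ring with derivation δ (characteristic zero) and let A be a differential R-algebra generated as a differential algebra by a single element a. Suppose a satisfies P(a, δa, …, δʳa) = 0 with P ∈ R[x₀,…,xᵣ] and the separant s := (∂P/∂xᵣ)(a,…,δʳa) is nonzero and A is a domain. Then the localization A[1/s] is generated as an R-algebra by the finite set {a, δa, …, δʳa, 1/s}. -/
open MvPolynomial in
theorem chainRuleAux {R A : Type*} [CommRing R] [CommRing A] [Algebra R A] {σ : Type*} [Fintype σ]
    [DecidableEq σ]
    (δR : Derivation ℤ R R) (δ : Derivation ℤ A A)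
    (hcompat : ∀ x : R, δ (algebraMap R A x) = algebraMap R A (δR x))
    (v : σ → A) (P : MvPolynomial σ R) :
    ∃ c ∈ Algebra.adjoin R (Set.range v),
      δ (aeval v P) = c + ∑ i, aeval v (pderiv i P) * δ (v i) := by
  induction P using MvPolynomial.induction_on with
  | C r =>
    refine ⟨algebraMap R A (δR r), Subalgebra.algebraMap_mem _ _, ?_⟩
    simp [aeval_C, hcompat]
  | add p q hp hq =>
    obtain ⟨c, hc, e⟩ := hp
    obtain ⟨d, hd, e'⟩ := hq
    refine ⟨c + d, add_mem hc hd, ?_⟩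
    rw [map_add, δ.map_add, e, e']
    simp only [map_add, add_mul, Finset.sum_add_distrib]
    ring
  | mul_X p i hp =>
    obtain ⟨c, hc, e⟩ := hp
    refine ⟨c * v i, mul_mem hc (Algebra.subset_adjoin ⟨i, rfl⟩), ?_⟩
    have h1 : δ (aeval v (p * X i)) = aeval v p * δ (v i) + v i * δ (aeval v p) := by
      rw [map_mul, aeval_X, Derivation.leibniz, smul_eq_mul, smul_eq_mul]
    have h2 : ∀ j, aeval v (pderiv j (p * X i)) * δ (v j)
        = v i * (aeval v (pderiv j p) * δ (v j))
          + (if j = i then aeval v p * δ (v i) else 0) := by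
      intro j
      rw [pderiv_mul, pderiv_X]
      by_cases h : j = i
      · subst h; simp; try ring
      · simp [Pi.single_eq_of_ne (Ne.symm h), h]; try ring
    rw [h1, e]
    simp only [h2, Finset.sum_add_distrib, Finset.sum_ite_eq', Finset.mem_univ, if_pos,
      ← Finset.mul_sum]
    ring

/-- Let `R` be a differential ring (characteristic zero) with
derivation `δR`, and `A` a differential `R`-algebra which is a domain, differentially
generated over `R` by a single element `a`. Suppose `P(a, δa, …, δʳa) = 0` with
`P ∈ R[x₀, …, xᵣ]` and the separant `s := (∂P/∂xᵣ)(a, …, δʳa)` is nonzero. Then the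
localization `A[1/s]` is generated as an `R`-algebra by `{a, δa, …, δʳa, 1/s}`. -/
theorem localization_finitely_generated_of_separant {R A : Type*} [CommRing R] [CharZero R]
    [CommRing A] [IsDomain A] [Algebra R A]
    (δR : Derivation ℤ R R) (δ : Derivation ℤ A A)
    (hcompat : ∀ x : R, δ (algebraMap R A x) = algebraMap R A (δR x))
    (a : A)
    (hgen : Algebra.adjoin R (Set.range fun k : ℕ => (⇑δ)^[k] a) = ⊤)
    (r : ℕ) (P : MvPolynomial (Fin (r + 1)) R)
    (hP : MvPolynomial.aeval (fun i : Fin (r + 1) => (⇑δ)^[(i : ℕ)] a) P = 0)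
    (s : A)
    (hsdef : s = MvPolynomial.aeval (fun i : Fin (r + 1) => (⇑δ)^[(i : ℕ)] a)
      (MvPolynomial.pderiv (Fin.last r) P))
    (hs : s ≠ 0)
    (B : Type*) [CommRing B] [Algebra R B] [Algebra A B] [IsScalarTower R A B]
    [IsLocalization.Away s B] :
    Algebra.adjoin R
      (insert (Ring.inverse (algebraMap A B s))
        (Set.range fun i : Fin (r + 1) => algebraMap A B ((⇑δ)^[(i : ℕ)] a))) = ⊤ := by
  classical
  set f : A →ₐ[R] B := IsScalarTower.toAlgHom R A B with hf
  have hfmap : ∀ x : A, f x = algebraMap A B x := fun x => rfl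
  set u : B := Ring.inverse (algebraMap A B s) with hu
  set T : Subalgebra R B := Algebra.adjoin R
      (insert u (Set.range fun i : Fin (r + 1) => algebraMap A B ((⇑δ)^[(i : ℕ)] a))) with hT
  have hsu : IsUnit (algebraMap A B s) :=
    IsLocalization.map_units B (⟨s, Submonoid.mem_powers s⟩ : Submonoid.powers s)
  have hus : u * algebraMap A B s = 1 := Ring.inverse_mul_cancel _ hsu
  -- filtration
  set Ak : ℕ → Subalgebra R A :=
    fun k => Algebra.adjoin R ((fun j : ℕ => (⇑δ)^[j] a) '' Set.Iic k) with hAk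
  have hle : ∀ {j k : ℕ}, j ≤ k → Ak j ≤ Ak k := fun h =>
    Algebra.adjoin_mono (Set.image_mono (Set.Iic_subset_Iic.mpr h))
  have hδA : ∀ k : ℕ, ∀ x ∈ Ak k, δ x ∈ Ak (k + 1) := by
    intro k x hx
    induction hx using Algebra.adjoin_induction with
    | mem y hy =>
      obtain ⟨j, hj, rfl⟩ := hy
      rw [← Function.iterate_succ_apply' δ j a]
      exact Algebra.subset_adjoin ⟨j + 1, Nat.succ_le_succ hj, rfl⟩
    | algebraMap r => rw [hcompat]; exact Subalgebra.algebraMap_mem _ _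
    | add x y hx hy ihx ihy => rw [δ.map_add]; exact add_mem ihx ihy
    | mul x y hx hy ihx ihy =>
      rw [Derivation.leibniz, smul_eq_mul, smul_eq_mul]
      exact add_mem (mul_mem (hle (Nat.le_succ k) hx) ihy)
        (mul_mem (hle (Nat.le_succ k) hy) ihx)
  have hvmem : ∀ (Q : MvPolynomial (Fin (r + 1)) R),
      MvPolynomial.aeval (fun i : Fin (r + 1) => (⇑δ)^[(i : ℕ)] a) Q ∈ Ak r := by
    intro Q
    have h1 : Algebra.adjoin R (Set.range fun i : Fin (r + 1) => (⇑δ)^[(i : ℕ)] a) ≤ Ak r := by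
      apply Algebra.adjoin_le
      rintro _ ⟨i, rfl⟩
      exact Algebra.subset_adjoin ⟨(i : ℕ), Nat.lt_succ_iff.mp i.isLt, rfl⟩
    apply h1
    rw [Algebra.adjoin_range_eq_range_aeval]
    exact ⟨Q, rfl⟩
  have hsA : s ∈ Ak r := hsdef ▸ hvmem _
  have hδs : δ s ∈ Ak (r + 1) := hδA r s hsA
  -- base case: s * δ^[r+1] a ∈ Ak r
  have base : s * (⇑δ)^[r + 1] a ∈ Ak r := by
    obtain ⟨c, hc, e⟩ := chainRuleAux δR δ hcompat
      (fun i : Fin (r + 1) => (⇑δ)^[(i : ℕ)] a) P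
    rw [hP, δ.map_zero] at e
    rw [Fin.sum_univ_castSucc] at e
    have hlast : MvPolynomial.aeval (fun i : Fin (r + 1) => (⇑δ)^[(i : ℕ)] a)
          (MvPolynomial.pderiv (Fin.last r) P) * δ ((⇑δ)^[((Fin.last r : Fin (r+1)) : ℕ)] a)
        = s * (⇑δ)^[r + 1] a := by
      rw [← hsdef, Fin.val_last, ← Function.iterate_succ_apply' δ r a]
    rw [hlast] at e
    have e2 : s * (⇑δ)^[r + 1] a
        = -c - ∑ i : Fin r, MvPolynomial.aeval (fun i : Fin (r + 1) => (⇑δ)^[(i : ℕ)] a)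
            (MvPolynomial.pderiv i.castSucc P) * δ ((⇑δ)^[((i.castSucc : Fin (r+1)) : ℕ)] a) := by
      linear_combination -e
    rw [e2]
    have hcmem : c ∈ Ak r := by
      refine (Algebra.adjoin_le ?_) hc
      rintro _ ⟨i, rfl⟩
      exact Algebra.subset_adjoin ⟨(i : ℕ), Nat.lt_succ_iff.mp i.isLt, rfl⟩
    refine sub_mem (neg_mem hcmem) (Subalgebra.sum_mem _ ?_)
    intro i _
    refine mul_mem (hvmem _) ?_
    rw [Fin.coe_castSucc, ← Function.iterate_succ_apply' δ (i : ℕ) a]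
    exact Algebra.subset_adjoin ⟨(i : ℕ) + 1, Nat.succ_le_of_lt i.isLt, rfl⟩
  -- key: s^(n+1) * δ^[r+1+n] a ∈ Ak (r+n)
  have key : ∀ n : ℕ, s ^ (n + 1) * (⇑δ)^[r + 1 + n] a ∈ Ak (r + n) := by
    intro n
    induction n with
    | zero => simpa using base
    | succ n ih =>
      have e : s ^ (n + 1 + 1) * (⇑δ)^[r + 1 + (n + 1)] a
          = s * δ (s ^ (n + 1) * (⇑δ)^[r + 1 + n] a)
            - (n + 1 : ℕ) • (δ s * (s ^ (n + 1) * (⇑δ)^[r + 1 + n] a)) := by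
        rw [Derivation.leibniz, Derivation.leibniz_pow]
        have : r + 1 + (n + 1) = (r + 1 + n) + 1 := by omega
        rw [this, Function.iterate_succ_apply' δ (r + 1 + n) a]
        simp only [smul_eq_mul, nsmul_eq_mul, Nat.cast_add, Nat.cast_one, Nat.add_sub_cancel]
        ring
      rw [e]
      have h1 : s ∈ Ak (r + n + 1) := hle (by omega) hsA
      have h2 : δ s ∈ Ak (r + n + 1) := hle (by omega) hδs
      have h3 : s ^ (n + 1) * (⇑δ)^[r + 1 + n] a ∈ Ak (r + n + 1) := hle (by omega) ih
      have hrn : r + (n + 1) = r + n + 1 := by omega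
      rw [hrn]
      exact sub_mem (mul_mem h1 (hδA _ _ ih)) (nsmul_mem (mul_mem h2 h3) _)
  -- images of δ^[k] a lie in T
  have himg : ∀ k : ℕ, algebraMap A B ((⇑δ)^[k] a) ∈ T := by
    intro k
    induction k using Nat.strong_induction_on with
    | _ k IH =>
      by_cases hk : k ≤ r
      · exact Algebra.subset_adjoin (Set.mem_insert_iff.mpr (Or.inr ⟨⟨k, Nat.lt_succ_of_le hk⟩, rfl⟩))
      · push_neg at hk
        set n : ℕ := k - r - 1 with hn
        have hk' : k = r + 1 + n := by omega
        have hkey := key n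
        have hAkT : ∀ x ∈ Ak (r + n), algebraMap A B x ∈ T := by
          intro x hx
          have : f x ∈ (Ak (r + n)).map f := ⟨x, hx, rfl⟩
          rw [hAk, AlgHom.map_adjoin] at this
          refine Algebra.adjoin_le ?_ this
          rintro _ ⟨_, ⟨j, hj, rfl⟩, rfl⟩
          have hj' : j ≤ r + n := hj
          have hjk : j < k := by omega
          exact IH j hjk
        have hmem : algebraMap A B (s ^ (n + 1) * (⇑δ)^[k] a) ∈ T := by
          apply hAkT
          rw [hk']
          exact hkey
        have heq : algebraMap A B ((⇑δ)^[k] a)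
            = u ^ (n + 1) * algebraMap A B (s ^ (n + 1) * (⇑δ)^[k] a) := by
          rw [map_mul, map_pow, ← mul_assoc, ← mul_pow, hus, one_pow, one_mul]
        rw [heq]
        exact mul_mem (pow_mem (Algebra.subset_adjoin (Set.mem_insert _ _)) _) hmem
  -- conclude
  have hAT : ∀ x : A, algebraMap A B x ∈ T := by
    intro x
    have hx : x ∈ Algebra.adjoin R (Set.range fun k : ℕ => (⇑δ)^[k] a) := by
      rw [hgen]; trivial
    have : f x ∈ (Algebra.adjoin R (Set.range fun k : ℕ => (⇑δ)^[k] a)).map f := ⟨x, hx, rfl⟩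
    rw [AlgHom.map_adjoin] at this
    refine Algebra.adjoin_le ?_ this
    rintro _ ⟨_, ⟨j, rfl⟩, rfl⟩
    exact himg j
  rw [eq_top_iff]
  rintro b -
  obtain ⟨⟨x, t⟩, hb⟩ := IsLocalization.surj (Submonoid.powers s) b
  obtain ⟨m, hm⟩ := t.2
  have hb' : b * (algebraMap A B s) ^ m = algebraMap A B x := by
    rw [← hb, ← hm, map_pow]
  have : b = algebraMap A B x * u ^ m := by
    calc b = b * ((algebraMap A B s) ^ m * u ^ m) := by
            rw [← mul_pow, mul_comm (algebraMap A B s) u, hus, one_pow, mul_one]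
      _ = (b * (algebraMap A B s) ^ m) * u ^ m := by ring
      _ = algebraMap A B x * u ^ m := by rw [hb']
  rw [this]
  exact mul_mem (hAT x) (pow_mem (Algebra.subset_adjoin (Set.mem_insert _ _)) _)
end

section
/- Let K be a field of characteristic zero viewed as a differential field with zero derivation, and let A be a differential K-algebra with derivation δ that is differentially simple and finitely generated as a K-algebra (not just differentially). Then for any maximal ideal M of A, the quotient map ψ : A → A/M induces an injective differential homomorphism T_ψ : A → (A/M)[[t]] via T_ψ(a) = Σ ψ(δᵏa) tᵏ/k!. -/
/-!
Since the factorials are units of `A ⧸ M` (they come from `K`), the iterated Leibniz rule makes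
`a ↦ ∑ ψ (δᵏ a) tᵏ / k!` a ring homomorphism, and it visibly turns `δ` into `d/dt`. An element
lies in its kernel iff all its derivatives lie in `M`; these elements form a `δ`-stable ideal
inside the proper ideal `M`, which is therefore zero by differential simplicity.
-/

open Finset PowerSeries Nat
open scoped Ring

theorem Ring.inverse_mul_eq_inverse_of_eq_mul {M₀ : Type*} [CommMonoidWithZero M₀] {a b c : M₀}
    (ha : IsUnit a) (h : a = b * c) : a⁻¹ʳ * b = c⁻¹ʳ := by
  have hc : IsUnit c := isUnit_of_mul_isUnit_right (h ▸ ha)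
  rw [← Ring.mul_inverse_cancel_right c (a⁻¹ʳ * b) hc, mul_assoc _ b, ← h,
    Ring.inverse_mul_cancel a ha, one_mul]

theorem inverse_factorial_mul_choose {S : Type*} [CommRing S] (hfact : ∀ n, IsUnit (n ! : S))
    (i j : ℕ) : ((i + j) ! : S)⁻¹ʳ * (i + j).choose i = (i ! : S)⁻¹ʳ * (j ! : S)⁻¹ʳ := by
  have h : ((i + j) ! : S) = (i + j).choose i * (i ! * j !) := by
    have := Nat.choose_mul_factorial_mul_factorial (Nat.le_add_right i j)
    rw [Nat.add_sub_cancel_left] at this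
    rw [← this]
    push_cast
    ring
  rw [Ring.inverse_mul_eq_inverse_of_eq_mul (hfact _) h, Ring.mul_inverse_rev, mul_comm]

namespace Derivation

variable {R A : Type*} [CommSemiring R] [CommRing A] [Algebra R A] (D : Derivation R A A)

theorem iterate_leibniz (n : ℕ) (a b : A) :
    D^[n] (a * b) = ∑ ij ∈ antidiagonal n, n.choose ij.1 • (D^[ij.1] a * D^[ij.2] b) := by
  induction n with
  | zero => simp
  | succ n ih =>
    rw [sum_antidiagonal_choose_succ_nsmul (M := A) (fun i j => D^[i] a * D^[j] b) n]
    simp only [Function.iterate_succ_apply', ih, map_sum, map_nsmul, leibniz, smul_eq_mul,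
      smul_add, sum_add_distrib]
    congr 1
    refine sum_congr rfl fun ⟨i, j⟩ hij ↦ ?_
    rw [n.choose_symm_of_eq_add (mem_antidiagonal.1 hij).symm, mul_comm]

theorem iterate_map_one_succ (n : ℕ) : D^[n + 1] 1 = 0 := by
  rw [Function.iterate_succ_apply, map_one_eq_zero, iterate_map_zero]

def stableCore (I : Ideal A) : Ideal A where
  carrier := {a | ∀ n, D^[n] a ∈ I}
  add_mem' ha hb n := by rw [iterate_map_add]; exact I.add_mem (ha n) (hb n)
  zero_mem' n := by rw [iterate_map_zero]; exact I.zero_mem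
  smul_mem' c a ha n := by
    rw [smul_eq_mul, iterate_leibniz]
    exact I.sum_mem fun ij _ => I.nsmul_mem (I.mul_mem_left _ (ha ij.2)) _

theorem mem_stableCore {I : Ideal A} {a : A} : a ∈ D.stableCore I ↔ ∀ n, D^[n] a ∈ I := Iff.rfl

theorem stableCore_le (I : Ideal A) : D.stableCore I ≤ I := fun _ ha => ha 0

theorem map_mem_stableCore {I : Ideal A} {a : A} (ha : a ∈ D.stableCore I) :
    D a ∈ D.stableCore I := fun n => by
  rw [← Function.iterate_succ_apply]; exact ha (n + 1)

variable {S : Type*} [CommRing S]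

noncomputable def taylor (ψ : A →+* S) (hfact : ∀ n, IsUnit (n ! : S)) : A →+* S⟦X⟧ where
  toFun a := PowerSeries.mk fun n => ψ (D^[n] a) * (n ! : S)⁻¹ʳ
  map_one' := by
    ext (_ | n) <;> simp [coeff_one, iterate_map_one_succ]
  map_mul' a b := by
    ext n
    rw [coeff_mul, coeff_mk, iterate_leibniz, map_sum, sum_mul]
    refine sum_congr rfl fun ⟨i, j⟩ hij => ?_
    obtain rfl : i + j = n := mem_antidiagonal.1 hij
    rw [map_nsmul, map_mul, nsmul_eq_mul, coeff_mk, coeff_mk]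
    linear_combination ψ (D^[i] a) * ψ (D^[j] b) * inverse_factorial_mul_choose hfact i j
  map_zero' := by
    ext n; simp
  map_add' a b := by
    ext n; simp [add_mul]

variable (ψ : A →+* S) (hfact : ∀ n, IsUnit (n ! : S))

@[simp]
theorem coeff_taylor (a : A) (n : ℕ) :
    coeff n (D.taylor ψ hfact a) = ψ (D^[n] a) * (n ! : S)⁻¹ʳ := by
  simp [taylor]

theorem taylor_apply_derivation (a : A) :
    D.taylor ψ hfact (D a) = d⁄dX S (D.taylor ψ hfact a) := by
  ext n
  have hsucc : ((n + 1) ! : S)⁻¹ʳ * (n + 1) = (n ! : S)⁻¹ʳ :=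
    Ring.inverse_mul_eq_inverse_of_eq_mul (hfact _) (by push_cast [Nat.factorial_succ]; rfl)
  rw [coeff_derivative, coeff_taylor, coeff_taylor, ← Function.iterate_succ_apply, mul_assoc,
    hsucc]

theorem ker_taylor : RingHom.ker (D.taylor ψ hfact) = D.stableCore (RingHom.ker ψ) := by
  ext a
  simp [PowerSeries.ext_iff, (hfact _).ringInverse.mul_left_eq_zero, mem_stableCore]

end Derivation

theorem taylor_of_maximal_ideal_injective_general {K A : Type*} [Field K] [CharZero K]
    [CommRing A] [Algebra K A]
    (δ : Derivation K A A)
    (hsimple : ∀ I : Ideal A, (∀ a ∈ I, δ a ∈ I) → I = ⊥ ∨ I = ⊤)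
    (M : Ideal A) (hM : M.IsMaximal) :
    ∃ F : A →+* PowerSeries (A ⧸ M),
      (∀ (a : A) (k : ℕ), PowerSeries.coeff (R := A ⧸ M) k (F a) =
        Ideal.Quotient.mk M ((⇑δ)^[k] a) * Ring.inverse (k.factorial : A ⧸ M)) ∧
      Function.Injective F ∧
      (∀ (a : A) (k : ℕ), PowerSeries.coeff (R := A ⧸ M) k (F (δ a)) =
        (k + 1 : A ⧸ M) * PowerSeries.coeff (R := A ⧸ M) (k + 1) (F a)) := by
  have hfact (n : ℕ) : IsUnit (n ! : A ⧸ M) := by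
    simpa using (Nat.cast_ne_zero.2 n.factorial_ne_zero : (n ! : K) ≠ 0).isUnit.map
      (algebraMap K (A ⧸ M))
  refine ⟨δ.taylor (Ideal.Quotient.mk M) hfact, δ.coeff_taylor _ hfact, ?_, fun a k => ?_⟩
  · rw [RingHom.injective_iff_ker_eq_bot, Derivation.ker_taylor, Ideal.mk_ker]
    refine (hsimple _ fun _ => δ.map_mem_stableCore).resolve_right fun htop => hM.ne_top ?_
    exact top_le_iff.1 (htop ▸ δ.stableCore_le M)
  · rw [Derivation.taylor_apply_derivation, coeff_derivative, mul_comm]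

/-- Let `K` be a field of characteristic zero viewed as a
differential field with zero derivation, and let `A` be a differential `K`-algebra
(so the derivation `δ` is `K`-linear) which is differentially simple and finitely
generated as a `K`-algebra. Then for any maximal ideal `M` of `A`, the quotient map
`ψ : A → A/M` induces an injective differential ring homomorphism
`T_ψ : A → (A/M)[[t]]`, `T_ψ(a) = Σ_k ψ(δᵏ a) tᵏ / k!`. -/
theorem taylor_of_maximal_ideal_injective {K A : Type*} [Field K] [CharZero K]
    [CommRing A] [Algebra K A] [Algebra.FiniteType K A]
    (δ : Derivation K A A)
    (hsimple : ∀ I : Ideal A, (∀ a ∈ I, δ a ∈ I) → I = ⊥ ∨ I = ⊤)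
    (M : Ideal A) (hM : M.IsMaximal) :
    ∃ F : A →+* PowerSeries (A ⧸ M),
      (∀ (a : A) (k : ℕ), PowerSeries.coeff (R := A ⧸ M) k (F a) =
        Ideal.Quotient.mk M ((⇑δ)^[k] a) * Ring.inverse (k.factorial : A ⧸ M)) ∧
      Function.Injective F ∧
      (∀ (a : A) (k : ℕ), PowerSeries.coeff (R := A ⧸ M) k (F (δ a)) =
        (k + 1 : A ⧸ M) * PowerSeries.coeff (R := A ⧸ M) (k + 1) (F a)) :=
  taylor_of_maximal_ideal_injective_general δ hsimple M hM
end
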